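/- Let T(n+1,n), n ∈ ℤ, be a family of evolution operators on a Banach space X admitting exponential dichotomies of finite rank on ℤ⁺ and on ℤ⁻ with projections P⁺(n) and P⁻(n). An element Ψ₀ ∈ X* belongs to (R(P⁻(0)))^⊥ ∩ (R(I − P⁺(0)))^⊥ if and only if there exists a bounded sequence (Ψ(m))_{m∈ℤ} in X* with Ψ(0) = Ψ₀ and Ψ(m) = (T(m+1,m))* Ψ(m+1) for all m ∈ ℤ. In this case Ψ(m) belongs to R(I − (P⁻(m))*) for m ≤ 0 and to R((P⁺(m))*) for m ≥ 0. -/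

import Mathlib

open Set

variable {X : Type*} [NormedAddCommGroup X] [NormedSpace ℝ X] [CompleteSpace X]

/-- The evolution operators `T(n,m) = T_{n-1} ∘ ⋯ ∘ T_m` (for `n ≥ m`) associated with a
family of one-step operators `T k = T(k+1,k)`. -/
noncomputable def evolOp (T : ℤ → X →L[ℝ] X) (n m : ℤ) : X →L[ℝ] X :=
  (List.range (n - m).toNat).foldl (fun A k => (T (m + k)).comp A) (ContinuousLinearMap.id ℝ X)

/-- A (discrete) exponential dichotomy on an interval `J ⊆ ℤ` with exponent `β`, bound `M`
and projections `P n`, for the evolution family generated by the one-step operators `T n`.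
`P n` projects onto the unstable part: `(iii)` forward decay on the ranges of `I - P n`;
`(iv)` backward decay (`T(n,m)` is invertible from `R(P m)` onto `R(P n)` with inverse of
norm at most `M e^{-β(n-m)}`). -/
structure ExpDichotomyOn (T : ℤ → X →L[ℝ] X) (J : Set ℤ) (β M : ℝ)
    (P : ℤ → X →L[ℝ] X) : Prop where
  beta_pos : 0 < β
  bound_pos : 0 < M
  isProj : ∀ n ∈ J, (P n).comp (P n) = P n
  commute : ∀ m ∈ J, ∀ n ∈ J, m ≤ n →
    (P n).comp (evolOp T n m) = (evolOp T n m).comp (P m)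
  isoRange : ∀ m ∈ J, ∀ n ∈ J, m ≤ n →
    ⇑(evolOp T n m) '' Set.range (P m) = Set.range (P n)
  stable : ∀ m ∈ J, ∀ n ∈ J, m ≤ n → ∀ x : X,
    ‖evolOp T n m (x - P m x)‖ ≤ M * Real.exp (-β * ((n - m : ℤ) : ℝ)) * ‖x‖
  unstable : ∀ m ∈ J, ∀ n ∈ J, m ≤ n → ∀ x w : X, w ∈ Set.range (P m) →
    evolOp T n m w = P n x → ‖w‖ ≤ M * Real.exp (-β * ((n - m : ℤ) : ℝ)) * ‖x‖

/-- The dichotomy with projections `P` has finite rank `k` on `J`. -/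
def DichotomyRankOn (P : ℤ → X →L[ℝ] X) (J : Set ℤ) (k : ℕ) : Prop :=
  ∀ n ∈ J, FiniteDimensional ℝ (LinearMap.range (P n : X →ₗ[ℝ] X)) ∧
    Module.finrank ℝ (LinearMap.range (P n : X →ₗ[ℝ] X)) = k

/-- The Banach-space adjoint (dual map) of a continuous linear operator. -/
noncomputable def dualOp (f : X →L[ℝ] X) :
    StrongDual ℝ X →L[ℝ] StrongDual ℝ X :=
  (ContinuousLinearMap.compL ℝ X X ℝ).flip f

/-!
A bounded solution of the adjoint equation satisfies `Ψ(m) x = Ψ(n) (T(n,m) x)` for `m ≤ n`.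
Pairing with the decaying directions of the dichotomies, forward in time on `R(I − P⁺)` and
backward in time on `R(P⁻)`, shows that `Ψ(m)` annihilates these spaces. Conversely, if `Ψ₀`
annihilates `R(P⁻(0))` and `R(I − P⁺(0))`, set `Ψ(m) = Ψ₀ ∘ T(0,m)` for `m ≤ 0`, which only sees
the decaying part `R(I − P⁻(m))`, and `Ψ(m) = Ψ₀ ∘ T(m,0)⁻¹ ∘ P⁺(m)` for `m ≥ 0`, where the
inverse of `T(m,0)` on the unstable range decays as well.
-/

section

variable {E : Type*} [NormedAddCommGroup E] [NormedSpace ℝ E]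

theorem dualOp_apply (f : E →L[ℝ] E) (ψ : StrongDual ℝ E) : dualOp f ψ = ψ.comp f := rfl

theorem mem_range_dualOp_of_apply_sub_eq_zero {P : E →L[ℝ] E} {ψ : StrongDual ℝ E}
    (hψ : ∀ x, ψ (x - P x) = 0) : ψ ∈ range (dualOp P) :=
  ⟨ψ, ContinuousLinearMap.ext fun x => by
    rw [dualOp_apply, ContinuousLinearMap.comp_apply, eq_comm, ← sub_eq_zero, ← map_sub, hψ]⟩

theorem mem_range_dualOp_id_sub_of_apply_eq_zero {P : E →L[ℝ] E} {ψ : StrongDual ℝ E}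
    (hψ : ∀ x, ψ (P x) = 0) : ψ ∈ range (dualOp (ContinuousLinearMap.id ℝ E - P)) :=
  ⟨ψ, ContinuousLinearMap.ext fun x => by
    rw [dualOp_apply, ContinuousLinearMap.comp_apply, sub_apply,
      ContinuousLinearMap.id_apply, map_sub, hψ, sub_zero]⟩

theorem evolOp_self (T : ℤ → E →L[ℝ] E) (m : ℤ) : evolOp T m m = ContinuousLinearMap.id ℝ E := by
  simp [evolOp]

theorem evolOp_succ (T : ℤ → E →L[ℝ] E) {m n : ℤ} (h : m ≤ n) :
    evolOp T (n + 1) m = (T n).comp (evolOp T n m) := by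
  have hlen : (n + 1 - m).toNat = (n - m).toNat + 1 := by omega
  simp only [evolOp, hlen, List.range_succ, List.pure_def, List.bind_eq_flatMap,
    List.flatMap_append, List.flatMap_cons, Int.ofNat_toNat, List.flatMap_nil, List.append_nil,
    List.foldl_append, List.foldl_cons, List.foldl_nil]
  rw [show m + max (n - m) 0 = n by omega]

theorem evolOp_succ_self (T : ℤ → E →L[ℝ] E) (m : ℤ) : evolOp T (m + 1) m = T m := by
  rw [evolOp_succ T le_rfl, evolOp_self, ContinuousLinearMap.comp_id]

theorem evolOp_comp (T : ℤ → E →L[ℝ] E) {m k n : ℤ} (hmk : m ≤ k) (hkn : k ≤ n) :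
    (evolOp T n k).comp (evolOp T k m) = evolOp T n m := by
  induction n, hkn using Int.leInduction with
  | base => rw [evolOp_self, ContinuousLinearMap.id_comp]
  | succ n hkn ih =>
    rw [evolOp_succ T hkn, evolOp_succ T (hmk.trans hkn), ContinuousLinearMap.comp_assoc, ih]

theorem evolOp_comp_succ (T : ℤ → E →L[ℝ] E) {m n : ℤ} (hmn : m < n) :
    (evolOp T n (m + 1)).comp (T m) = evolOp T n m := by
  rw [← evolOp_succ_self T m, evolOp_comp T (by omega) (by omega)]

theorem apply_eq_apply_evolOp_of_dual_solution {T : ℤ → E →L[ℝ] E} {Ψ : ℤ → StrongDual ℝ E}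
    (hΨ : ∀ m, Ψ m = dualOp (T m) (Ψ (m + 1))) {m n : ℤ} (hmn : m ≤ n) (x : E) :
    Ψ m x = Ψ n (evolOp T n m x) := by
  induction n, hmn using Int.leInduction generalizing x with
  | base => rw [evolOp_self]; rfl
  | succ n hmn ih =>
    rw [ih, hΨ n, dualOp_apply, evolOp_succ T hmn]
    rfl

theorem eq_zero_of_abs_le_mul_exp {r A β : ℝ} (hβ : 0 < β)
    (h : ∀ k : ℕ, |r| ≤ A * Real.exp (-β * k)) : r = 0 := by
  have hlim : Filter.Tendsto (fun k : ℕ => A * Real.exp (-β) ^ k) Filter.atTop (nhds 0) := by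
    simpa using (tendsto_pow_atTop_nhds_zero_of_lt_one (Real.exp_nonneg _)
      (Real.exp_lt_one_iff.mpr (neg_lt_zero.mpr hβ))).const_mul A
  have h' : ∀ k : ℕ, |r| ≤ A * Real.exp (-β) ^ k := fun k => by
    rw [← Real.exp_nat_mul, mul_comm (k : ℝ)]
    exact h k
  exact abs_nonpos_iff.mp (le_of_tendsto_of_tendsto' tendsto_const_nhds hlim h')

namespace ExpDichotomyOn

variable {T : ℤ → E →L[ℝ] E} {J : Set ℤ} {β M : ℝ} {P : ℤ → E →L[ℝ] E}

theorem bound_mul_exp_le (h : ExpDichotomyOn T J β M P) {m n : ℤ} (hmn : m ≤ n) :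
    M * Real.exp (-β * ((n - m : ℤ) : ℝ)) ≤ M := by
  refine mul_le_of_le_one_right h.bound_pos.le (Real.exp_le_one_iff.mpr ?_)
  have : (0 : ℝ) ≤ ((n - m : ℤ) : ℝ) := by exact_mod_cast sub_nonneg.mpr hmn
  nlinarith [h.beta_pos]

theorem eq_of_evolOp_eq (h : ExpDichotomyOn T J β M P) {m n : ℤ} (hm : m ∈ J) (hn : n ∈ J)
    (hmn : m ≤ n) {w₁ w₂ : E} (hw₁ : w₁ ∈ range (P m)) (hw₂ : w₂ ∈ range (P m))
    (heq : evolOp T n m w₁ = evolOp T n m w₂) : w₁ = w₂ := by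
  obtain ⟨a, rfl⟩ := hw₁
  obtain ⟨b, rfl⟩ := hw₂
  have hbound := h.unstable m hm n hn hmn 0 (P m (a - b)) ⟨a - b, rfl⟩
    (by rw [map_sub, map_sub, heq, sub_self, map_zero])
  rw [norm_zero, mul_zero, norm_le_zero_iff, map_sub, sub_eq_zero] at hbound
  exact hbound

theorem exists_unstable_inverse (h : ExpDichotomyOn T J β M P) {m n : ℤ} (hm : m ∈ J)
    (hn : n ∈ J) (hmn : m ≤ n) :
    ∃ S : E →L[ℝ] E, ∀ x, S x ∈ range (P m) ∧ evolOp T n m (S x) = P n x ∧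
      ‖S x‖ ≤ M * Real.exp (-β * ((n - m : ℤ) : ℝ)) * ‖x‖ := by
  let V : ℤ → Submodule ℝ E := fun k => LinearMap.range (P k : E →ₗ[ℝ] E)
  have hmaps : ∀ w ∈ V m, evolOp T n m w ∈ V n := fun w hw => by
    change _ ∈ range (P n)
    rw [← h.isoRange m hm n hn hmn]
    exact mem_image_of_mem _ hw
  let Φ : V m →ₗ[ℝ] V n := (evolOp T n m : E →ₗ[ℝ] E).restrict hmaps
  have hΦ : Function.Bijective Φ := by
    refine ⟨fun w₁ w₂ heq => Subtype.ext (h.eq_of_evolOp_eq hm hn hmn w₁.2 w₂.2 ?_), ?_⟩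
    · exact congrArg Subtype.val heq
    · rintro ⟨y, hy⟩
      rw [LinearMap.mem_range] at hy
      obtain ⟨w, hw, rfl⟩ : y ∈ evolOp T n m '' range (P m) := by
        rw [h.isoRange m hm n hn hmn]; exact hy
      exact ⟨⟨w, hw⟩, rfl⟩
  let S : E →ₗ[ℝ] E := (V m).subtype ∘ₗ (LinearEquiv.ofBijective Φ hΦ).symm.toLinearMap ∘ₗ
    (P n : E →ₗ[ℝ] E).rangeRestrict
  have hS : ∀ x, S x ∈ range (P m) ∧ evolOp T n m (S x) = P n x := fun x =>
    ⟨((LinearEquiv.ofBijective Φ hΦ).symm _).2,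
      congrArg Subtype.val ((LinearEquiv.ofBijective Φ hΦ).apply_symm_apply _)⟩
  have hSbound : ∀ x, ‖S x‖ ≤ M * Real.exp (-β * ((n - m : ℤ) : ℝ)) * ‖x‖ := fun x =>
    h.unstable m hm n hn hmn x (S x) (hS x).1 (hS x).2
  exact ⟨S.mkContinuous _ hSbound, fun x => ⟨(hS x).1, (hS x).2, hSbound x⟩⟩

theorem norm_comp_evolOp_le (h : ExpDichotomyOn T J β M P) {m n : ℤ} (hm : m ∈ J) (hn : n ∈ J)
    (hmn : m ≤ n) {ψ : StrongDual ℝ E} (hψ : ∀ x, ψ (P n x) = 0) :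
    ‖ψ.comp (evolOp T n m)‖ ≤ ‖ψ‖ * M := by
  refine ContinuousLinearMap.opNorm_le_bound _ (mul_nonneg (norm_nonneg _) h.bound_pos.le)
    fun x => ?_
  -- `T(n,m)` maps `R(P m)` into `R(P n)`, which `ψ` annihilates
  have hproj : ψ (evolOp T n m (P m x)) = 0 := by
    rw [← ContinuousLinearMap.comp_apply (evolOp T n m), ← h.commute m hm n hn hmn]
    exact hψ _
  calc ‖ψ (evolOp T n m x)‖ = ‖ψ (evolOp T n m (x - P m x))‖ := by
        rw [map_sub, map_sub, hproj, sub_zero]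
    _ ≤ ‖ψ‖ * (M * Real.exp (-β * ((n - m : ℤ) : ℝ)) * ‖x‖) :=
        ψ.le_opNorm_of_le (h.stable m hm n hn hmn x)
    _ ≤ ‖ψ‖ * M * ‖x‖ := by
        rw [mul_assoc ‖ψ‖]
        gcongr ‖ψ‖ * (?_ * ‖x‖)
        exact h.bound_mul_exp_le hmn

end ExpDichotomyOn

section DualSolution

variable {T : ℤ → E →L[ℝ] E} {β M : ℝ} {P : ℤ → E →L[ℝ] E} {Ψ : ℤ → StrongDual ℝ E} {C : ℝ}

theorem apply_sub_proj_eq_zero_of_dual_solution {a : ℤ} (h : ExpDichotomyOn T (Ici a) β M P)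
    (hC : ∀ n, ‖Ψ n‖ ≤ C) (hΨ : ∀ n, Ψ n = dualOp (T n) (Ψ (n + 1))) {m : ℤ} (hm : a ≤ m)
    (x : E) : Ψ m (x - P m x) = 0 := by
  refine eq_zero_of_abs_le_mul_exp (A := C * M * ‖x‖) h.beta_pos fun k => ?_
  have hdecay := h.stable m hm (m + k) (mem_Ici.mpr (by omega)) (by omega) x
  rw [show m + (k : ℤ) - m = k by omega, Int.cast_natCast] at hdecay
  rw [apply_eq_apply_evolOp_of_dual_solution hΨ (show m ≤ m + k by omega), ← Real.norm_eq_abs]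
  calc _ ≤ C * (M * Real.exp (-β * k) * ‖x‖) :=
        (Ψ _).le_of_opNorm_le_of_le (hC _) hdecay
    _ = C * M * ‖x‖ * Real.exp (-β * k) := by ring

theorem apply_proj_eq_zero_of_dual_solution {a : ℤ} (h : ExpDichotomyOn T (Iic a) β M P)
    (hC : ∀ n, ‖Ψ n‖ ≤ C) (hΨ : ∀ n, Ψ n = dualOp (T n) (Ψ (n + 1))) {m : ℤ} (hm : m ≤ a)
    (x : E) : Ψ m (P m x) = 0 := by
  refine eq_zero_of_abs_le_mul_exp (A := C * M * ‖x‖) h.beta_pos fun k => ?_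
  have hmk : m - k ∈ Iic a := mem_Iic.mpr (by omega)
  obtain ⟨w, hw, hwx⟩ : P m x ∈ evolOp T m (m - k) '' range (P (m - k)) := by
    rw [h.isoRange _ hmk m hm (by omega)]
    exact mem_range_self x
  have hdecay := h.unstable _ hmk m hm (by omega) x w hw hwx
  rw [show m - (m - (k : ℤ)) = k by omega, Int.cast_natCast] at hdecay
  rw [← hwx, ← apply_eq_apply_evolOp_of_dual_solution hΨ (show m - k ≤ m by omega),
    ← Real.norm_eq_abs]
  calc _ ≤ C * (M * Real.exp (-β * k) * ‖x‖) :=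
        (Ψ _).le_of_opNorm_le_of_le (hC _) hdecay
    _ = C * M * ‖x‖ * Real.exp (-β * k) := by ring

theorem exists_forward_dual_solution {a : ℤ} (h : ExpDichotomyOn T (Ici a) β M P)
    {ψ : StrongDual ℝ E} (hψ : ∀ x, ψ (x - P a x) = 0) :
    ∃ Φ : ℤ → StrongDual ℝ E, Φ a = ψ ∧ (∀ n ≥ a, ‖Φ n‖ ≤ ‖ψ‖ * M) ∧
      ∀ n ≥ a, Φ n = dualOp (T n) (Φ (n + 1)) := by
  have ha : a ∈ Ici a := self_mem_Ici
  have hS : ∀ n, ∃ S : E →L[ℝ] E, a ≤ n → ∀ x, S x ∈ range (P a) ∧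
      evolOp T n a (S x) = P n x ∧ ‖S x‖ ≤ M * Real.exp (-β * ((n - a : ℤ) : ℝ)) * ‖x‖ :=
    fun n => if hn : a ≤ n then (h.exists_unstable_inverse ha hn hn).imp fun _ hS _ => hS
      else ⟨0, fun hn' => absurd hn' hn⟩
  choose S hS using hS
  have hS_eq : ∀ n ≥ a, ∀ x w, w ∈ range (P a) → evolOp T n a w = P n x → S n x = w :=
    fun n hn x w hw hwx =>
      h.eq_of_evolOp_eq ha hn hn (hS n hn x).1 hw ((hS n hn x).2.1.trans hwx.symm)
  refine ⟨fun n => ψ.comp (S n), ?_, fun n hn => ?_, fun n hn => ?_⟩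
  · ext x
    have hSa : S a x = P a x := hS_eq a le_rfl x _ (mem_range_self x) (by rw [evolOp_self]; rfl)
    have hψx := hψ x
    rw [map_sub, sub_eq_zero] at hψx
    rw [ContinuousLinearMap.comp_apply, hSa, hψx]
  · have hSn : ‖S n‖ ≤ M := ContinuousLinearMap.opNorm_le_bound _ h.bound_pos.le fun x =>
      (hS n hn x).2.2.trans (by gcongr; exact h.bound_mul_exp_le hn)
    calc ‖ψ.comp (S n)‖ ≤ ‖ψ‖ * ‖S n‖ := ψ.opNorm_comp_le _
      _ ≤ ‖ψ‖ * M := by gcongr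
  · ext x
    change ψ (S n x) = ψ (S (n + 1) (T n x))
    -- `S n x` is also the unstable preimage of `P (n+1) (T n x)`, since `T n` commutes with `P`
    refine congrArg ψ (hS_eq (n + 1) (by omega) _ _ (hS n hn x).1 ?_).symm
    have hcomm := h.commute n hn (n + 1) (mem_Ici.mpr (by omega)) (by omega)
    rw [evolOp_succ_self] at hcomm
    rw [evolOp_succ T hn, ContinuousLinearMap.comp_apply, (hS n hn x).2.1]
    exact (DFunLike.congr_fun hcomm x).symm

end DualSolution

theorem exists_bounded_dual_solution {T : ℤ → E →L[ℝ] E} {βp Mp βm Mm : ℝ}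
    {Pp Pm : ℤ → E →L[ℝ] E} (hp : ExpDichotomyOn T (Ici 0) βp Mp Pp)
    (hm : ExpDichotomyOn T (Iic 0) βm Mm Pm) {ψ : StrongDual ℝ E}
    (hψm : ∀ x, ψ (Pm 0 x) = 0) (hψp : ∀ x, ψ (x - Pp 0 x) = 0) :
    ∃ Ψ : ℤ → StrongDual ℝ E, (∃ C : ℝ, ∀ m, ‖Ψ m‖ ≤ C) ∧ Ψ 0 = ψ ∧
      ∀ m, Ψ m = dualOp (T m) (Ψ (m + 1)) := by
  obtain ⟨Φ, hΦ₀, hΦ_le, hΦ⟩ := exists_forward_dual_solution hp hψp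
  set Ψ : ℤ → StrongDual ℝ E := fun m => if 0 ≤ m then Φ m else ψ.comp (evolOp T 0 m)
  have hΨ₀ : Ψ 0 = ψ := by simp [Ψ, hΦ₀]
  have hΨ_neg : ∀ m ≤ 0, Ψ m = ψ.comp (evolOp T 0 m) := fun m hm0 => by
    rcases hm0.lt_or_eq with hlt | rfl
    · simp [Ψ, not_le.mpr hlt]
    · rw [hΨ₀, evolOp_self, ContinuousLinearMap.comp_id]
  refine ⟨Ψ, ⟨‖ψ‖ * Mp + ‖ψ‖ * Mm, fun m => ?_⟩, hΨ₀, fun m => ?_⟩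
  · have := mul_nonneg (norm_nonneg ψ) hp.bound_pos.le
    have := mul_nonneg (norm_nonneg ψ) hm.bound_pos.le
    rcases le_or_gt 0 m with h0 | h0
    · simp only [Ψ, if_pos h0]
      linarith [hΦ_le m h0]
    · rw [hΨ_neg m h0.le]
      linarith [hm.norm_comp_evolOp_le (mem_Iic.mpr h0.le) self_mem_Iic h0.le hψm]
  · rcases le_or_gt 0 m with h0 | h0
    · simp only [Ψ, if_pos h0, if_pos (show 0 ≤ m + 1 by omega)]
      exact hΦ m h0
    · rw [hΨ_neg m h0.le, hΨ_neg (m + 1) (by omega), dualOp_apply,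
        ContinuousLinearMap.comp_assoc, evolOp_comp_succ T h0]

end

theorem bounded_adjoint_solutions_iff_annihilator_general
    (T : ℤ → X →L[ℝ] X)
    (βp Mp βm Mm : ℝ) (Pp Pm : ℤ → X →L[ℝ] X)
    (hp : ExpDichotomyOn T (Set.Ici 0) βp Mp Pp)
    (hm : ExpDichotomyOn T (Set.Iic 0) βm Mm Pm) :
    (∀ Ψ₀ : StrongDual ℝ X,
      ((∀ x : X, Ψ₀ (Pm 0 x) = 0) ∧ (∀ x : X, Ψ₀ (x - Pp 0 x) = 0)) ↔
        ∃ Ψ : ℤ → StrongDual ℝ X, (∃ C : ℝ, ∀ m : ℤ, ‖Ψ m‖ ≤ C) ∧ Ψ 0 = Ψ₀ ∧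
          ∀ m : ℤ, Ψ m = dualOp (T m) (Ψ (m + 1)))
    ∧ ∀ Ψ : ℤ → StrongDual ℝ X, (∃ C : ℝ, ∀ m : ℤ, ‖Ψ m‖ ≤ C) →
        (∀ m : ℤ, Ψ m = dualOp (T m) (Ψ (m + 1))) →
        (∀ m ≤ (0:ℤ), Ψ m ∈ Set.range (dualOp (ContinuousLinearMap.id ℝ X - Pm m)))
        ∧ (∀ m ≥ (0:ℤ), Ψ m ∈ Set.range (dualOp (Pp m))) := by
  refine ⟨fun Ψ₀ => ⟨fun ⟨hΨ₀m, hΨ₀p⟩ => exists_bounded_dual_solution hp hm hΨ₀m hΨ₀p, ?_⟩,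
    fun Ψ ⟨C, hC⟩ hΨ => ⟨fun m hm0 => ?_, fun m hm0 => ?_⟩⟩
  · rintro ⟨Ψ, ⟨C, hC⟩, rfl, hΨ⟩
    exact ⟨apply_proj_eq_zero_of_dual_solution hm hC hΨ le_rfl,
      apply_sub_proj_eq_zero_of_dual_solution hp hC hΨ le_rfl⟩
  · exact mem_range_dualOp_id_sub_of_apply_eq_zero
      (apply_proj_eq_zero_of_dual_solution hm hC hΨ hm0)
  · exact mem_range_dualOp_of_apply_sub_eq_zero
      (apply_sub_proj_eq_zero_of_dual_solution hp hC hΨ hm0)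

/-- **Bounded full-line solutions of the adjoint equation.**  Let `T(n+1,n)` admit
exponential dichotomies of finite ranks on `ℤ⁺` and `ℤ⁻` with projections `P⁺(n)` and
`P⁻(n)`.  Then `Ψ₀ ∈ (R(P⁻(0)))^⊥ ∩ (R(I − P⁺(0)))^⊥` if and only if there is a bounded
sequence `(Ψ(m))_{m∈ℤ}` in `X*` with `Ψ(0) = Ψ₀` and `Ψ(m) = (T(m+1,m))* Ψ(m+1)` for all
`m`; in this case `Ψ(m) ∈ R(I − (P⁻(m))*)` for `m ≤ 0` and `Ψ(m) ∈ R((P⁺(m))*)` for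
`m ≥ 0`. -/
theorem bounded_adjoint_solutions_iff_annihilator
    (T : ℤ → X →L[ℝ] X)
    (βp Mp βm Mm : ℝ) (Pp Pm : ℤ → X →L[ℝ] X) (kp km : ℕ)
    (hp : ExpDichotomyOn T (Set.Ici 0) βp Mp Pp)
    (hrkp : DichotomyRankOn Pp (Set.Ici 0) kp)
    (hm : ExpDichotomyOn T (Set.Iic 0) βm Mm Pm)
    (hrkm : DichotomyRankOn Pm (Set.Iic 0) km) :
    (∀ Ψ₀ : StrongDual ℝ X,
      ((∀ x : X, Ψ₀ (Pm 0 x) = 0) ∧ (∀ x : X, Ψ₀ (x - Pp 0 x) = 0)) ↔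
        ∃ Ψ : ℤ → StrongDual ℝ X, (∃ C : ℝ, ∀ m : ℤ, ‖Ψ m‖ ≤ C) ∧ Ψ 0 = Ψ₀ ∧
          ∀ m : ℤ, Ψ m = dualOp (T m) (Ψ (m + 1)))
    ∧ ∀ Ψ : ℤ → StrongDual ℝ X, (∃ C : ℝ, ∀ m : ℤ, ‖Ψ m‖ ≤ C) →
        (∀ m : ℤ, Ψ m = dualOp (T m) (Ψ (m + 1))) →
        (∀ m ≤ (0:ℤ), Ψ m ∈ Set.range (dualOp (ContinuousLinearMap.id ℝ X - Pm m)))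
        ∧ (∀ m ≥ (0:ℤ), Ψ m ∈ Set.range (dualOp (Pp m))) :=
  bounded_adjoint_solutions_iff_annihilator_general T βp Mp βm Mm Pp Pm hp hm
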